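/- arXiv:math/0409501 — 2 statements merged into one kernel-verified Lean document; each statement's English description precedes it below -/
import Mathlib

section
/- Let τ ∈ ℂ with positive imaginary part, let L = ℤ + ℤτ be the lattice spanned by 1 and τ, and let R_τ = {α ∈ ℂ : αL ⊆ L} be its multiplier ring. Then R_τ strictly contains ℤ (i.e., there exists α ∈ R_τ with α ∉ ℤ) if and only if τ is algebraic over ℚ of degree 2. -/
/-! If `α = a + bτ` multiplies `L` into itself and `b ≠ 0`, then writing `ατ = c + dτ`
gives the relation `bτ² + (a - d)τ - c = 0`, so `τ` has degree at most two over `ℚ`, and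
exactly two because a non-real number is not rational. Conversely, clearing the denominators
of the minimal polynomial gives `nτ² + aτ + c = 0` with `n ≠ 0`; then `nτ` maps `1` and `τ`
into `L`, and it is not an integer since it is not real. -/

open Polynomial

theorem forall_mul_mem_span_pair_iff {R A : Type*} [CommSemiring R] [Semiring A] [Algebra R A]
    (α u v : A) :
    (∀ z ∈ Submodule.span R {u, v}, α * z ∈ Submodule.span R {u, v}) ↔
      α * u ∈ Submodule.span R {u, v} ∧ α * v ∈ Submodule.span R {u, v} := by
  simpa [SetLike.le_def, Set.insert_subset_iff] using Submodule.span_le (R := R) (s := {u, v})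
    (p := (Submodule.span R {u, v}).comap (LinearMap.mulLeft R α))

theorem natDegree_minpoly_eq_two_of_aeval_eq_zero {K B : Type*} [Field K] [Ring B] [Nontrivial B]
    [Algebra K B] {x : B} (hx : x ∉ (algebraMap K B).range) {p : K[X]} (hp : p ≠ 0)
    (hdeg : p.natDegree ≤ 2) (hroot : aeval x p = 0) : (minpoly K x).natDegree = 2 := by
  have hint : IsIntegral K x := IsAlgebraic.isIntegral ⟨p, hp, hroot⟩
  have hle : (minpoly K x).natDegree ≤ p.natDegree :=
    natDegree_le_natDegree (minpoly.degree_le_of_ne_zero K x hp hroot)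
  have := (minpoly.two_le_natDegree_iff hint).mpr hx
  omega

theorem exists_int_quadratic_of_natDegree_minpoly_eq_two {K : Type*} [Field K] [CharZero K]
    {x : K} (hx : IsIntegral ℚ x) (hdeg : (minpoly ℚ x).natDegree = 2) :
    ∃ n a c : ℤ, n ≠ 0 ∧ n * x ^ 2 + a * x + c = 0 := by
  set q₁ := (minpoly ℚ x).coeff 1
  set q₀ := (minpoly ℚ x).coeff 0
  have hroot : x ^ 2 + q₁ * x + q₀ = 0 := by
    have h := minpoly.aeval ℚ x
    rw [(minpoly.monic hx).as_sum, hdeg] at h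
    simp only [Finset.sum_range_succ, Finset.sum_range_zero, map_add, map_mul, map_pow, aeval_X,
      aeval_C, pow_zero, pow_one, mul_one, zero_add, eq_ratCast] at h
    linear_combination h
  refine ⟨q₁.den * q₀.den, q₁.num * q₀.den, q₀.num * q₁.den, by positivity, ?_⟩
  have h₁ : (q₁.num : K) = q₁ * q₁.den := by exact_mod_cast q₁.mul_den_eq_num.symm
  have h₀ : (q₀.num : K) = q₀ * q₀.den := by exact_mod_cast q₀.mul_den_eq_num.symm
  push_cast [h₁, h₀]
  linear_combination ((q₁.den : K) * q₀.den) * hroot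

theorem exists_int_quadratic_of_mul_mem_span_one_pair {A : Type*} [CommRing A] {τ α : A}
    (hα : α * 1 ∈ Submodule.span ℤ {1, τ} ∧ α * τ ∈ Submodule.span ℤ {1, τ})
    (hαℤ : α ∉ Set.range ((↑) : ℤ → A)) :
    ∃ n a c : ℤ, n ≠ 0 ∧ n * τ ^ 2 + a * τ + c = 0 := by
  obtain ⟨⟨a, b, hab⟩, ⟨c, d, hcd⟩⟩ :=
    And.imp Submodule.mem_span_pair.1 Submodule.mem_span_pair.1 hα
  simp only [zsmul_eq_mul, mul_one] at hab hcd
  have hb : b ≠ 0 := by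
    rintro rfl
    exact hαℤ ⟨a, by simpa using hab⟩
  refine ⟨b, a - d, -c, hb, ?_⟩
  rw [← hab] at hcd
  push_cast
  linear_combination -hcd

theorem intCast_mul_mem_span_one_pair_of_quadratic {A : Type*} [CommRing A] {τ : A} {n a c : ℤ}
    (h : n * τ ^ 2 + a * τ + c = 0) :
    n * τ * 1 ∈ Submodule.span ℤ {1, τ} ∧ n * τ * τ ∈ Submodule.span ℤ {1, τ} := by
  simp only [Submodule.mem_span_pair, zsmul_eq_mul, mul_one]
  exact ⟨⟨0, n, by simp⟩, ⟨-c, -a, by push_cast; linear_combination -h⟩⟩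

theorem intCast_mul_notMem_range_intCast {τ : ℂ} (hτ : τ.im ≠ 0) {n : ℤ} (hn : n ≠ 0) :
    n * τ ∉ Set.range ((↑) : ℤ → ℂ) := by
  rintro ⟨m, hm⟩
  have him := congrArg Complex.im hm
  simp only [Complex.intCast_im, Complex.mul_im, Complex.intCast_re, zero_mul, add_zero] at him
  exact mul_ne_zero (Int.cast_ne_zero.2 hn) hτ him.symm

theorem notMem_range_algebraMap_rat_of_im_ne_zero {τ : ℂ} (hτ : τ.im ≠ 0) :
    τ ∉ (algebraMap ℚ ℂ).range := by
  rintro ⟨q, rfl⟩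
  simp at hτ

theorem isAlgebraic_rat_and_degree_minpoly_eq_two_iff {K : Type*} [Field K] [CharZero K] {x : K}
    (hx : x ∉ (algebraMap ℚ K).range) :
    (IsAlgebraic ℚ x ∧ (minpoly ℚ x).degree = 2) ↔
      ∃ n a c : ℤ, n ≠ 0 ∧ n * x ^ 2 + a * x + c = 0 := by
  constructor
  · rintro ⟨halg, hdeg⟩
    exact exists_int_quadratic_of_natDegree_minpoly_eq_two halg.isIntegral
      (natDegree_eq_of_degree_eq_some hdeg)
  · rintro ⟨n, a, c, hn, h⟩
    set p : ℚ[X] := C (n : ℚ) * X ^ 2 + C (a : ℚ) * X + C (c : ℚ)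
    have hp : p.natDegree = 2 := natDegree_quadratic (by exact_mod_cast hn)
    have hp0 : p ≠ 0 := ne_zero_of_natDegree_gt (n := 0) (by omega)
    have hroot : aeval x p = 0 := by simpa [p] using h
    have halg : IsAlgebraic ℚ x := ⟨p, hp0, hroot⟩
    refine ⟨halg, degree_eq_iff_natDegree_eq_of_pos two_pos |>.2 ?_⟩
    exact natDegree_minpoly_eq_two_of_aeval_eq_zero hx hp0 hp.le hroot

/-- For τ in the upper half plane and L = ℤ + ℤτ, the multiplier ring
R_τ = {α : αL ⊆ L} strictly contains ℤ iff τ is algebraic of degree 2 over ℚ. -/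
theorem multiplier_ring_strictly_contains_int_iff_quadratic
    (τ : ℂ) (hτ : 0 < τ.im)
    (L : Submodule ℤ ℂ) (hL : L = Submodule.span ℤ ({1, τ} : Set ℂ))
    (R : Set ℂ) (hR : R = {α : ℂ | ∀ z ∈ L, α * z ∈ L}) :
    (∃ α ∈ R, α ∉ Set.range ((↑) : ℤ → ℂ)) ↔
      (IsAlgebraic ℚ τ ∧ (minpoly ℚ τ).degree = 2) := by
  subst hL hR
  rw [isAlgebraic_rat_and_degree_minpoly_eq_two_iff
    (notMem_range_algebraMap_rat_of_im_ne_zero hτ.ne')]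
  constructor
  · rintro ⟨α, hα, hαℤ⟩
    exact exists_int_quadratic_of_mul_mem_span_one_pair
      ((forall_mul_mem_span_pair_iff α 1 τ).1 hα) hαℤ
  · rintro ⟨n, a, c, hn, h⟩
    exact ⟨n * τ, (forall_mul_mem_span_pair_iff _ 1 τ).2
      (intCast_mul_mem_span_one_pair_of_quadratic h),
      intCast_mul_notMem_range_intCast hτ.ne' hn⟩
end

section
/- Let F be a finite field with q elements. The number of matrices g ∈ GL₂(F) (invertible 2×2 matrices over F) with trace(g) = 0 equals q³ − q². -/
/-- The number of trace-zero elements of GL₂(F), for F a finite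
field with q elements, is q³ − q². -/
theorem card_trace_zero_GL2 (F : Type) [Field F] [Fintype F]
    (q : ℕ) (hq : q = Fintype.card F) :
    Nat.card {g : GL (Fin 2) F // Matrix.trace (g : Matrix (Fin 2) (Fin 2) F) = 0} =
      q ^ 3 - q ^ 2 := by
  classical
  subst hq
  -- Step 1: pass from GL to unit matrices
  let e1 : {g : GL (Fin 2) F // Matrix.trace (g : Matrix (Fin 2) (Fin 2) F) = 0} ≃
      {m : Matrix (Fin 2) (Fin 2) F // IsUnit m ∧ Matrix.trace m = 0} :=
    { toFun := fun g => ⟨(g.1 : Matrix (Fin 2) (Fin 2) F), ⟨g.1.isUnit, g.2⟩⟩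
      invFun := fun m => ⟨m.2.1.unit, by
        have := m.2.1.unit_spec
        show Matrix.trace ((m.2.1.unit : Matrix (Fin 2) (Fin 2) F)) = 0
        rw [this]; exact m.2.2⟩
      left_inv := fun g => Subtype.ext (Units.ext (IsUnit.unit_spec _))
      right_inv := fun m => by
        ext : 1
        exact m.2.1.unit_spec }
  -- Step 2: pass to triples
  let e2 : {m : Matrix (Fin 2) (Fin 2) F // IsUnit m ∧ Matrix.trace m = 0} ≃
      {p : F × F × F // ¬ (p.1 * -p.1 - p.2.1 * p.2.2 = 0)} :=
    { toFun := fun m => ⟨(m.1 0 0, m.1 0 1, m.1 1 0), by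
        have htr : m.1 1 1 = -(m.1 0 0) := by
          have := m.2.2
          rw [Matrix.trace_fin_two] at this
          linear_combination this
        have hdet : m.1.det ≠ 0 := by
          intro h
          have := (Matrix.isUnit_iff_isUnit_det m.1).mp m.2.1
          rw [h] at this
          exact (not_isUnit_zero this)
        rw [Matrix.det_fin_two, htr] at hdet
        simpa using hdet⟩
      invFun := fun p => ⟨!![p.1.1, p.1.2.1; p.1.2.2, -p.1.1], by
        constructor
        · rw [Matrix.isUnit_iff_isUnit_det, Matrix.det_fin_two]
          simpa using (isUnit_iff_ne_zero.mpr (by simpa using p.2))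
        · rw [Matrix.trace_fin_two]; simp⟩
      left_inv := fun m => by
        have htr : m.1 1 1 = -(m.1 0 0) := by
          have := m.2.2
          rw [Matrix.trace_fin_two] at this
          linear_combination this
        ext i j
        fin_cases i <;> fin_cases j <;> simp [htr]
      right_inv := fun p => by
        ext <;> simp }
  rw [Nat.card_congr (e1.trans e2), Nat.card_eq_fintype_card,
    Fintype.card_subtype_compl]
  -- count the complement: bc = -a^2 has q^2 solutions
  let e3 : {p : F × F × F // p.1 * -p.1 - p.2.1 * p.2.2 = 0} ≃ F × F :=
    { toFun := fun p => (p.1.2.1, if p.1.2.1 = 0 then p.1.2.2 else p.1.1)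
      invFun := fun x =>
        if h : x.1 = 0 then ⟨(0, 0, x.2), by simp⟩
        else ⟨(x.2, x.1, -x.2 * x.2 / x.1), by field_simp; ring⟩
      left_inv := fun p => by
        obtain ⟨⟨a, b, c⟩, h⟩ := p
        by_cases hb : b = 0
        · have ha : a = 0 := by
            simp only [hb, zero_mul, sub_zero, mul_neg, neg_eq_zero, mul_self_eq_zero] at h
            exact h
          simp [hb, ha]
        · have hc : -a * a / b = c := by
            rw [div_eq_iff hb]
            linear_combination h
          have hc' : -(a * a) / b = c := by rw [← hc]; ring_nf
          simp [hb, hc, hc']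
      right_inv := fun x => by
        obtain ⟨b, t⟩ := x
        by_cases hb : b = 0
        · simp [hb]
        · simp [hb] }
  rw [Fintype.card_congr e3]
  simp only [Fintype.card_prod]
  congr 1 <;> ring
end
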